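/- arXiv:1410.3010 — 3 statements merged into one kernel-verified Lean document; each statement's English description precedes it below -/
import Mathlib

section
/- Let V, W, X, Y be t-element subsets of [m] whose characteristic vectors satisfy v < w < x < y in binary order, and suppose c1(v,w) = c1(x,y) = i and c2(v,w) = c2(x,y) = j (where c2(v,w) := min{j' > c1(v,w) : v(j')=1, w(j')=0}). Then V ∩ X ≠ V ∩ Y. -/
/-! Since `|S| = |T|`, the set `S \ T` is nonempty, and agreement below the first difference
puts its elements after `c1 S T`; so `c2 S T` is a genuine (not junk `sInf ∅ = 0`) element
of `S \ T`. Hence `j ∈ V ∩ X` while `j ∉ Y`. -/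

/-- Binary order on subsets of `Fin m` via characteristic vectors (coordinate 0
most significant): `S < T` iff at the first differing coordinate `i` we have
`i ∉ S` and `i ∈ T`. -/
def binLT {m : ℕ} (S T : Finset (Fin m)) : Prop :=
  ∃ i : Fin m, i ∉ S ∧ i ∈ T ∧ ∀ j < i, (j ∈ S ↔ j ∈ T)

/-- `c1 S T` : the minimum index `i` with `i ∉ S` and `i ∈ T` (as a natural number). -/
noncomputable def c1 {m : ℕ} (S T : Finset (Fin m)) : ℕ :=
  sInf {i | ∃ h : i < m, (⟨i, h⟩ : Fin m) ∉ S ∧ (⟨i, h⟩ : Fin m) ∈ T}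

/-- `c2 S T` : the minimum index `j > c1 S T` with `j ∈ S` and `j ∉ T`. -/
noncomputable def c2 {m : ℕ} (S T : Finset (Fin m)) : ℕ :=
  sInf {j | c1 S T < j ∧ ∃ h : j < m, (⟨j, h⟩ : Fin m) ∈ S ∧ (⟨j, h⟩ : Fin m) ∉ T}

/-- The coloring `σ(ST) = (c1(ST), c2(ST), f_S(S ∩ T), f_T(S ∩ T))`. -/
noncomputable def sigma {m t : ℕ} (f : Finset (Fin m) → Finset (Fin m) → Fin (2 ^ t))
    (S T : Finset (Fin m)) : ℕ × ℕ × Fin (2 ^ t) × Fin (2 ^ t) :=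
  (c1 S T, c2 S T, f S (S ∩ T), f T (S ∩ T))

theorem c1_le_of_mem_sdiff {m : ℕ} {S T : Finset (Fin m)} {i : Fin m} (hi : i ∈ T \ S) :
    c1 S T ≤ i := by
  rw [Finset.mem_sdiff] at hi
  exact Nat.sInf_le ⟨i.isLt, hi.2, hi.1⟩

namespace binLT

variable {m : ℕ} {S T : Finset (Fin m)}

theorem exists_mem_sdiff_c1_lt (h : binLT S T) (hc : S.card = T.card) :
    ∃ a ∈ S \ T, c1 S T < a := by
  obtain ⟨i, hiS, hiT, hagree⟩ := h
  obtain ⟨a, ha⟩ : (S \ T).Nonempty := by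
    rw [← Finset.card_pos, Finset.card_sdiff_comm hc, Finset.card_pos]
    exact ⟨i, Finset.mem_sdiff.mpr ⟨hiT, hiS⟩⟩
  have hia : i < a := by
    rw [Finset.mem_sdiff] at ha
    rcases lt_trichotomy a i with hlt | rfl | hgt
    · exact absurd ((hagree a hlt).mp ha.1) ha.2
    · exact absurd ha.1 hiS
    · exact hgt
  exact ⟨a, ha, (c1_le_of_mem_sdiff (Finset.mem_sdiff.mpr ⟨hiT, hiS⟩)).trans_lt hia⟩

theorem exists_val_eq_c2_mem_sdiff (h : binLT S T) (hc : S.card = T.card) :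
    ∃ k : Fin m, (k : ℕ) = c2 S T ∧ k ∈ S \ T := by
  obtain ⟨a, ha, hlt⟩ := h.exists_mem_sdiff_c1_lt hc
  rw [Finset.mem_sdiff] at ha
  obtain ⟨-, hm, hkS, hkT⟩ := Nat.sInf_mem (s := {j | c1 S T < j ∧ ∃ h : j < m,
    (⟨j, h⟩ : Fin m) ∈ S ∧ (⟨j, h⟩ : Fin m) ∉ T}) ⟨a, hlt, a.isLt, ha⟩
  exact ⟨⟨c2 S T, hm⟩, rfl, Finset.mem_sdiff.mpr ⟨hkS, hkT⟩⟩

end binLT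

theorem stmt_3_general {m t : ℕ} (V W X Y : Finset (Fin m))
    (hV : V.card = t) (hW : W.card = t) (hX : X.card = t) (hY : Y.card = t)
    (hVW : binLT V W) (hXY : binLT X Y)
    (j : ℕ)
    (h3 : c2 V W = j) (h4 : c2 X Y = j) :
    V ∩ X ≠ V ∩ Y := by
  obtain ⟨k, hk, hkVW⟩ := hVW.exists_val_eq_c2_mem_sdiff (hV.trans hW.symm)
  obtain ⟨k', hk', hkXY⟩ := hXY.exists_val_eq_c2_mem_sdiff (hX.trans hY.symm)
  rw [show k' = k from Fin.ext (by rw [hk, hk', h3, h4]), Finset.mem_sdiff] at hkXY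
  rw [Finset.mem_sdiff] at hkVW
  intro hinter
  have hkVX : k ∈ V ∩ X := Finset.mem_inter.mpr ⟨hkVW.1, hkXY.1⟩
  rw [hinter] at hkVX
  exact hkXY.2 (Finset.mem_inter.mp hkVX).2

theorem stmt_3 {m t : ℕ} (V W X Y : Finset (Fin m))
    (hV : V.card = t) (hW : W.card = t) (hX : X.card = t) (hY : Y.card = t)
    (hVW : binLT V W) (hWX : binLT W X) (hXY : binLT X Y)
    (i j : ℕ)
    (h1 : c1 V W = i) (h2 : c1 X Y = i)
    (h3 : c2 V W = j) (h4 : c2 X Y = j) :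
    V ∩ X ≠ V ∩ Y :=
  stmt_3_general V W X Y hV hW hX hY hVW hXY j h3 h4
end

section
/- Define the coloring σ on pairs of t-subsets of [m] as follows: for characteristic vectors v < w of sets S, T, σ(vw) = (c1(vw), c2(vw), f_S(S∩T), f_T(S∩T)), where c1(vw) is the first index with v=0, w=1, c2(vw) is the first index after c1 with v=1, w=0, and each f_B : 2^B → [2^t] is a fixed injection. Then σ is a (3,2)-coloring: for any three vertices u < v < w, the three pairs uv, uw, vw receive at least 2 distinct colors. -/
/-! Already the first coordinate `c1` separates `uv` from `vw`: at index `c1 u v` the set `v`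
contains the element, at index `c1 v w` it does not. -/

theorem binLT.exists_notMem_mem {m : ℕ} {S T : Finset (Fin m)} (h : binLT S T) :
    ∃ i : Fin m, i ∉ S ∧ i ∈ T :=
  h.imp fun _ hi => ⟨hi.1, hi.2.1⟩

theorem c1_spec {m : ℕ} {S T : Finset (Fin m)} (h : ∃ i : Fin m, i ∉ S ∧ i ∈ T) :
    ∃ hc : c1 S T < m, (⟨c1 S T, hc⟩ : Fin m) ∉ S ∧ (⟨c1 S T, hc⟩ : Fin m) ∈ T := by
  obtain ⟨i, hiS, hiT⟩ := h
  exact Nat.sInf_mem (s := {i | ∃ h : i < m, (⟨i, h⟩ : Fin m) ∉ S ∧ (⟨i, h⟩ : Fin m) ∈ T})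
    ⟨i, i.isLt, hiS, hiT⟩

theorem c1_ne_c1_of_binLT {m : ℕ} {u v w : Finset (Fin m)} (huv : binLT u v)
    (hvw : binLT v w) : c1 u v ≠ c1 v w := by
  intro heq
  obtain ⟨_, -, hv⟩ := c1_spec huv.exists_notMem_mem
  obtain ⟨_, hv', -⟩ := c1_spec hvw.exists_notMem_mem
  simp only [heq] at hv
  exact hv' hv

theorem stmt_5_general {m t : ℕ} (f : Finset (Fin m) → Finset (Fin m) → Fin (2 ^ t))
    (u v w : Finset (Fin m))
    (huv : binLT u v) (hvw : binLT v w) :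
    ¬(sigma f u v = sigma f u w ∧ sigma f u w = sigma f v w) := by
  rintro ⟨h₁, h₂⟩
  exact c1_ne_c1_of_binLT huv hvw (congrArg Prod.fst (h₁.trans h₂))

theorem stmt_5 {m t : ℕ} (f : Finset (Fin m) → Finset (Fin m) → Fin (2 ^ t))
    (hf : ∀ B : Finset (Fin m), ∀ S₁ ⊆ B, ∀ S₂ ⊆ B, f B S₁ = f B S₂ → S₁ = S₂)
    (u v w : Finset (Fin m)) (hu : u.card = t) (hv : v.card = t) (hw : w.card = t)
    (huv : binLT u v) (hvw : binLT v w) :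
    ¬(sigma f u v = sigma f u w ∧ sigma f u w = sigma f v w) :=
  stmt_5_general f u v w huv hvw
end

section
/- With σ defined as the four-coordinate coloring (c1, c2, f_S(S∩T), f_T(S∩T)) on pairs of t-subsets of [m] (ordered as binary characteristic vectors), there is no monochromatic path of length 2 respecting the order: if v < w < x, then σ(vw) ≠ σ(wx). -/
theorem c1_ne_of_binLT {m : ℕ} {v w x : Finset (Fin m)} (hvw : binLT v w) (hwx : binLT w x) :
    c1 v w ≠ c1 w x := by
  intro heq
  obtain ⟨_, -, hw⟩ := c1_spec hvw.exists_notMem_mem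
  obtain ⟨_, hnw, -⟩ := c1_spec hwx.exists_notMem_mem
  simp only [← heq] at hnw
  exact hnw hw

theorem stmt_6_general {m t : ℕ} (f : Finset (Fin m) → Finset (Fin m) → Fin (2 ^ t))
    (v w x : Finset (Fin m))
    (hvw : binLT v w) (hwx : binLT w x) :
    sigma f v w ≠ sigma f w x :=
  fun heq => c1_ne_of_binLT hvw hwx (congrArg Prod.fst heq)

theorem stmt_6 {m t : ℕ} (f : Finset (Fin m) → Finset (Fin m) → Fin (2 ^ t))
    (hf : ∀ B : Finset (Fin m), ∀ S₁ ⊆ B, ∀ S₂ ⊆ B, f B S₁ = f B S₂ → S₁ = S₂)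
    (v w x : Finset (Fin m)) (hv : v.card = t) (hw : w.card = t) (hx : x.card = t)
    (hvw : binLT v w) (hwx : binLT w x) :
    sigma f v w ≠ sigma f w x :=
  stmt_6_general f v w x hvw hwx
end
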